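/- (Logit is lower bounded by reward) Let J be finite nonempty with positive weights p(j) summing to 1, r : J → ℝ, s ∈ ℝ. Set P = Σ_j p(j)·exp(s)/(exp(s)+exp(r(j))) and C = log(Σ_j p(j)·exp(r(j))). Then 0 < P < 1 and log(P/(1−P)) ≥ s − C. -/

import Mathlib

/-!
Write `E = ∑ j, p j * exp (r j)`. Then `1 - P` is the `p`-average of the concave map
`a ↦ a / (exp s + a)` at the points `exp (r j)`, so Jensen gives `1 - P ≤ E / (exp s + E)`.
Rearranged, this is `exp s / E ≤ P / (1 - P)`, and the logarithm of the left side is `s - C`.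
-/

open Set Finset

theorem concaveOn_div_add_self {x : ℝ} (hx : 0 ≤ x) :
    ConcaveOn ℝ (Ioi 0) fun a => a / (x + a) := by
  have hsub : Ioi (0 : ℝ) ⊆ (fun a => x + a) ⁻¹' Ioi 0 := fun a (ha : 0 < a) =>
    show 0 < x + a by positivity
  have hinv : ConvexOn ℝ (Ioi 0) fun a => (x + a)⁻¹ := by
    simpa [Function.comp_def] using
      ((convexOn_zpow (𝕜 := ℝ) (-1)).translate_right x).subset hsub (convex_Ioi 0)
  -- `a / (x + a) = 1 - x * (x + a)⁻¹`
  refine ((hinv.smul hx).neg.add_const 1).congr fun a (ha : 0 < a) => ?_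
  have : x + a ≠ 0 := by positivity
  simp only [Pi.add_apply, Pi.neg_apply, smul_eq_mul]
  field_simp
  ring

theorem logit_lower_bounded_by_reward (J : Type*) [Fintype J] [Nonempty J]
    (p : J → ℝ) (hp : ∀ j, 0 < p j) (hsum : ∑ j, p j = 1) (r : J → ℝ) (s : ℝ)
    (P C : ℝ)
    (hP : P = ∑ j, p j * (Real.exp s / (Real.exp s + Real.exp (r j))))
    (hC : C = Real.log (∑ j, p j * Real.exp (r j))) :
    0 < P ∧ P < 1 ∧ Real.log (P / (1 - P)) ≥ s - C := by
  set x := Real.exp s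
  set E := ∑ j, p j * Real.exp (r j)
  have hx : 0 < x := Real.exp_pos s
  have hE : 0 < E := sum_pos (fun j _ => by have := hp j; positivity) univ_nonempty
  have hPpos : 0 < P := hP ▸ sum_pos (fun j _ => by have := hp j; positivity) univ_nonempty
  have h1P : 1 - P = ∑ j, p j * (Real.exp (r j) / (x + Real.exp (r j))) := by
    rw [hP, ← hsum, ← sum_sub_distrib]
    refine sum_congr rfl fun j _ => ?_
    have : x + Real.exp (r j) ≠ 0 := by positivity
    field_simp
    ring
  have h1Ppos : 0 < 1 - P := h1P ▸ sum_pos (fun j _ => by have := hp j; positivity) univ_nonempty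
  have hJensen : 1 - P ≤ E / (x + E) := by
    simpa only [h1P, smul_eq_mul] using (concaveOn_div_add_self hx.le).le_map_sum
      (fun j _ => (hp j).le) hsum fun j _ => Real.exp_pos (r j)
  have hodds : x / E ≤ P / (1 - P) := by
    rw [div_le_div_iff₀ hE h1Ppos]
    rw [le_div_iff₀ (by positivity)] at hJensen
    linarith
  refine ⟨hPpos, by linarith, ?_⟩
  calc s - C = Real.log (x / E) := by rw [hC, Real.log_div hx.ne' hE.ne', Real.log_exp]
    _ ≤ Real.log (P / (1 - P)) := Real.log_le_log (by positivity) hodds
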